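/- arXiv:2009.08199 — 2 statements merged into one kernel-verified Lean document; each statement's English description precedes it below -/
import Mathlib

section
/- Under the setting of the manifold Lyapunov theorem, if M: I_{t^0} × P → ℝ is C^1, locally positive definite at the equilibrium x_e from t^0, and additionally decrescent at x_e from t^0 (i.e., M(t,x) ≤ β(d(x,x_e)) for some continuous strictly increasing β with β(0)=0 on some ball B_{s,x_e}), and Ṁ(t,x) ≤ 0 on I_{t^0} × B_{r,x_e}, then x_e is uniformly stable from t^0 (the δ in the stability definition can be chosen independently of t_0). -/
/-!
Along a solution starting at time `t₁` within `δ` of `xe`, where `δ` is chosen so that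
`β` stays below `α e` on `[0, δ)`, the function `u ↦ M u (x u)` does not increase for as long as
the solution stays in the closed `e`-ball. Hence at any such time `T`,
`α (d(x T, xe)) ≤ M T (x T) ≤ M t₁ (x t₁) ≤ β (d(x t₁, xe)) < α e`, so the solution can never
reach distance `e`. Neither `δ` nor `e` depends on `t₁`.
-/

open Set

theorem antitoneOn_of_exists_hasDerivAt_nonpos {D : Set ℝ} (hD : Convex ℝ D) {f : ℝ → ℝ}
    (hf : ContinuousOn f D) (hf' : ∀ x ∈ interior D, ∃ m ≤ 0, HasDerivAt f m x) :
    AntitoneOn f D := by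
  choose m hm_nonpos hm using hf'
  refine antitoneOn_of_deriv_nonpos hD hf
    (fun x hx => (hm x hx).differentiableAt.differentiableWithinAt) fun x hx => ?_
  rw [(hm x hx).deriv]
  exact hm_nonpos x hx

theorem ContinuousWithinAt.exists_pos_forall_Ico_lt {β : ℝ → ℝ}
    (hβ : ContinuousWithinAt β (Ici 0) 0) (hβ0 : β 0 = 0) {c : ℝ} (hc : 0 < c) :
    ∃ δ > 0, ∀ d ∈ Ico 0 δ, β d < c := by
  rw [ContinuousWithinAt, hβ0] at hβ
  obtain ⟨δ, hδ, hsub⟩ := mem_nhdsGE_iff_exists_Ico_subset.mp (hβ (Iio_mem_nhds hc))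
  exact ⟨δ, hδ, hsub⟩

theorem Continuous.forall_ge_lt_of_forall_Icc_le_imp_lt {α δ : Type*}
    [ConditionallyCompleteLinearOrder α] [TopologicalSpace α] [OrderTopology α]
    [DenselyOrdered α] [LinearOrder δ] [TopologicalSpace δ] [OrderClosedTopology δ]
    {f : α → δ} (hf : Continuous f) {a : α} {e : δ} (ha : f a < e)
    (hstep : ∀ T, a ≤ T → (∀ u ∈ Icc a T, f u ≤ e) → f T < e) :
    ∀ t, a ≤ t → f t < e := by
  intro t hat
  by_contra! hte
  obtain ⟨T, ⟨⟨haT, hTt⟩, hTe⟩, hT_least⟩ : ∃ T, IsLeast {u ∈ Icc a t | e ≤ f u} T :=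
    (isCompact_Icc.inter_right (isClosed_le continuous_const hf)).exists_isLeast
      ⟨t, ⟨hat, le_rfl⟩, hte⟩
  have hbefore : ∀ u ∈ Icc a T, e ≤ f u → u = T := fun u hu heu =>
    le_antisymm hu.2 (hT_least ⟨⟨hu.1, hu.2.trans hTt⟩, heu⟩)
  obtain ⟨c, hc, hfc⟩ := intermediate_value_Icc haT hf.continuousOn ⟨ha.le, hTe⟩
  have hfT : f T = e := hbefore c hc hfc.ge ▸ hfc
  refine (hstep T haT fun u hu => ?_).ne hfT
  by_contra! heu
  exact heu.ne' (hbefore u hu heu.le ▸ hfT)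

theorem lyapunov_uniformly_stable_manifold_general
    {P : Type*} [MetricSpace P]
    (Sol : Set (ℝ → P)) (hScont : ∀ x ∈ Sol, Continuous x)
    (xe : P)
    (t0 : ℝ) (M : ℝ → P → ℝ)
    (hMcont : Continuous fun q : ℝ × P => M q.1 q.2)
    (r : ℝ) (hr : 0 < r)
    (α : ℝ → ℝ)
    (hαm : StrictMonoOn α (Set.Ici 0)) (hα0 : α 0 = 0)
    (hlpdf : ∀ t ∈ Set.Ici t0, ∀ x ∈ Metric.ball xe r, α (dist x xe) ≤ M t x)
    (s : ℝ) (hs : 0 < s)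
    (β : ℝ → ℝ) (hβc : ContinuousOn β (Set.Ici 0))
    (hβ0 : β 0 = 0)
    (hdecr : ∀ t ∈ Set.Ici t0, ∀ x ∈ Metric.ball xe s, M t x ≤ β (dist x xe))
    (hdot : ∀ x ∈ Sol, ∀ t ∈ Set.Ici t0, x t ∈ Metric.ball xe r →
      ∃ m ≤ 0, HasDerivAt (fun s => M s (x s)) m t) :
    ∀ ε > 0, ∃ δ > 0, ∀ t₁ ∈ Set.Ici t0, ∀ x ∈ Sol,
      dist (x t₁) xe < δ → ∀ t ∈ Set.Ici t₁, dist (x t) xe < ε := by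
  intro ε hε
  set e := min ε (r / 2)
  have he : 0 < e := by positivity
  have her : e < r := (min_le_right _ _).trans_lt (half_lt_self hr)
  have hαe : 0 < α e := hα0 ▸ hαm self_mem_Ici he.le he
  obtain ⟨δ, hδ, hβδ⟩ := (hβc 0 self_mem_Ici).exists_pos_forall_Ico_lt hβ0 hαe
  refine ⟨min δ (min s e), by positivity, fun t₁ ht₁ x hx hx₁ t ht => ?_⟩
  simp only [lt_min_iff] at hx₁
  have hxc := hScont x hx
  refine ((hxc.dist continuous_const).forall_ge_lt_of_forall_Icc_le_imp_lt hx₁.2.2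
    (fun T hT hle => ?_) t ht).trans_le (min_le_left _ _)
  have hmono : M T (x T) ≤ M t₁ (x t₁) :=
    antitoneOn_of_exists_hasDerivAt_nonpos (convex_Icc t₁ T)
      (hMcont.comp (continuous_id.prodMk hxc)).continuousOn
      (fun u hu => hdot x hx u (ht₁.trans (interior_subset hu).1)
        ((hle u (interior_subset hu)).trans_lt her))
      ⟨le_rfl, hT⟩ ⟨hT, le_rfl⟩ hT
  refine (hαm.lt_iff_lt dist_nonneg he.le).mp ?_
  calc α (dist (x T) xe)
      ≤ M T (x T) := hlpdf T (ht₁.trans hT) (x T) ((hle T ⟨hT, le_rfl⟩).trans_lt her)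
    _ ≤ M t₁ (x t₁) := hmono
    _ ≤ β (dist (x t₁) xe) := hdecr t₁ ht₁ (x t₁) hx₁.2.1
    _ < α e := hβδ _ ⟨dist_nonneg, hx₁.1⟩

theorem lyapunov_uniformly_stable_manifold
    {P : Type*} [MetricSpace P]
    (Sol : Set (ℝ → P)) (hScont : ∀ x ∈ Sol, Continuous x)
    (xe : P) (heq : (fun _ : ℝ => xe) ∈ Sol)
    (t0 : ℝ) (M : ℝ → P → ℝ)
    (hMcont : Continuous fun q : ℝ × P => M q.1 q.2)
    (r : ℝ) (hr : 0 < r)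
    (α : ℝ → ℝ) (hαc : ContinuousOn α (Set.Ici 0))
    (hαm : StrictMonoOn α (Set.Ici 0)) (hα0 : α 0 = 0)
    (hMe : ∀ t ∈ Set.Ici t0, M t xe = 0)
    (hlpdf : ∀ t ∈ Set.Ici t0, ∀ x ∈ Metric.ball xe r, α (dist x xe) ≤ M t x)
    (s : ℝ) (hs : 0 < s)
    (β : ℝ → ℝ) (hβc : ContinuousOn β (Set.Ici 0))
    (hβm : StrictMonoOn β (Set.Ici 0)) (hβ0 : β 0 = 0)
    (hdecr : ∀ t ∈ Set.Ici t0, ∀ x ∈ Metric.ball xe s, M t x ≤ β (dist x xe))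
    (hdot : ∀ x ∈ Sol, ∀ t ∈ Set.Ici t0, x t ∈ Metric.ball xe r →
      ∃ m ≤ 0, HasDerivAt (fun s => M s (x s)) m t) :
    ∀ ε > 0, ∃ δ > 0, ∀ t₁ ∈ Set.Ici t0, ∀ x ∈ Sol,
      dist (x t₁) xe < δ → ∀ t ∈ Set.Ici t₁, dist (x t) xe < ε :=
  lyapunov_uniformly_stable_manifold_general Sol hScont xe t0 M hMcont r hr α hαm hα0 hlpdf s hs β
    hβc hβ0 hdecr hdot
end

section
/- (Time-dependent relative equilibrium theorem) A point z_e ∈ P is a relative equilibrium point of the G-invariant Hamiltonian system (P,ω,h,Φ,J) if and only if there exists a curve ξ(t) in 𝔤 such that z_e is a critical point, for every t ∈ ℝ, of the function h_{ξ,t} := h_t − ⟨J − μ_e, ξ(t)⟩, where μ_e := J(z_e). -/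
/- STATEMENT 11 (Time-dependent relative equilibrium theorem): z_e is a
relative equilibrium point of (P,ω,h,Φ,J) if and only if there exists a curve
ξ(t) in 𝔤 such that z_e is, for every t, a critical point of
h_{ξ,t} = h_t − ⟨J − μ_e, ξ(t)⟩, with μ_e = J(z_e). -/
theorem relative_equilibrium_iff_critical_point
    {P : Type*} [NormedAddCommGroup P] [NormedSpace ℝ P]
    {G : Type*} [Group G]
    {g : Type*} [AddCommGroup g] [Module ℝ g]
    (act : G → P → P)
    (hact_one : ∀ p, act 1 p = p)
    (hact_mul : ∀ a b p, act (a * b) p = act a (act b p))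
    (ω : P → P →L[ℝ] P →L[ℝ] ℝ)
    (hskew : ∀ p v w, ω p v w = - ω p w v)
    -- non-degeneracy of ω
    (hnd : ∀ p : P, Function.Injective (ω p))
    (h : ℝ → P → ℝ) (J : P → Module.Dual ℝ g)
    (fund : g → P → P) (expG : g → G)
    (Xh : ℝ → P → P)
    (hfund : ∀ ξ p, HasDerivAt (fun s : ℝ => act (expG (s • ξ)) p) (fund ξ p) 0)
    -- momentum map defining property: ι_{ξ_P}ω = d J_ξ
    (hmom : ∀ ξ p, HasFDerivAt (fun q => J q ξ) (ω p (fund ξ p)) p)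
    -- X_{h_t} is the Hamiltonian vector field of h_t
    (hham : ∀ t p, HasFDerivAt (h t) (ω p (Xh t p)) p)
    -- G-invariance of h
    (hinv : ∀ t a p, h t (act a p) = h t p)
    (z_e : P) :
    (∃ ξc : ℝ → g, ∀ t, Xh t z_e = fund (ξc t) z_e) ↔
      (∃ ξc : ℝ → g, ∀ t, HasFDerivAt
        (fun p => h t p - (J p (ξc t) - J z_e (ξc t)))
        (0 : P →L[ℝ] ℝ) z_e) := by
  constructor
  · rintro ⟨ξc, hξ⟩
    refine ⟨ξc, fun t => ?_⟩
    have H := (hham t z_e).sub (((hmom (ξc t) z_e).sub_const (J z_e (ξc t))))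
    rw [hξ t, sub_self] at H
    exact H
  · rintro ⟨ξc, hξ⟩
    refine ⟨ξc, fun t => ?_⟩
    have H := (hham t z_e).sub (((hmom (ξc t) z_e).sub_const (J z_e (ξc t))))
    have := H.unique (hξ t)
    exact hnd z_e (sub_eq_zero.mp this)
end
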